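/- Under the hypotheses of the importance sampling setup (ν ≪ ν̃, Z = E_ν[e^{-W}] finite positive, ν* with dν*/dν = e^{-W}/Z), the relative error satisfies the lower bound r(ν̃) ≥ √(e^{KL(ν* | ν̃)} − 1). -/

import Mathlib

/-!
Writing `g = dν*/dν̃`, Jensen's inequality for the convex function `exp` under `ν*` gives
`exp KL(ν* | ν̃) = exp (∫ log g dν*) ≤ ∫ g dν* = ∫ g² dν̃`. Since `g = e^{-W} (dν/dν̃) / Z` and the
mean of `e^{-W} (dν/dν̃)` under `ν̃` is `Z`, the right-hand side is `1 + r(ν̃)²`.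
-/

open MeasureTheory ProbabilityTheory Real

namespace MeasureTheory

variable {α : Type*} [MeasurableSpace α] {μ ν : Measure α}

lemma exp_integral_log_le_integral [IsProbabilityMeasure μ] {g : α → ℝ}
    (hpos : ∀ᵐ x ∂μ, 0 < g x) (hg : Integrable g μ) (hlog : Integrable (fun x ↦ log (g x)) μ) :
    exp (∫ x, log (g x) ∂μ) ≤ ∫ x, g x ∂μ := by
  have hexp_log : (fun x ↦ exp (log (g x))) =ᵐ[μ] g := by
    filter_upwards [hpos] with x hx using exp_log hx
  calc exp (∫ x, log (g x) ∂μ)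
      ≤ ∫ x, exp (log (g x)) ∂μ :=
        convexOn_exp.map_integral_le continuous_exp.continuousOn isClosed_univ
          (ae_of_all _ fun _ ↦ Set.mem_univ _) hlog (hg.congr hexp_log.symm)
    _ = ∫ x, g x ∂μ := integral_congr_ae hexp_log

namespace Measure

variable [SigmaFinite μ] [HaveLebesgueDecomposition μ ν]

lemma toReal_rnDeriv_pos (hμν : μ ≪ ν) : ∀ᵐ x ∂μ, 0 < (μ.rnDeriv ν x).toReal := by
  filter_upwards [rnDeriv_pos hμν, hμν.ae_le (rnDeriv_lt_top μ ν)] with x hpos hlt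
  exact ENNReal.toReal_pos hpos.ne' hlt.ne

lemma integrable_toReal_rnDeriv_iff_integrable_sq (hμν : μ ≪ ν) :
    Integrable (fun x ↦ (μ.rnDeriv ν x).toReal) μ ↔
      Integrable (fun x ↦ (μ.rnDeriv ν x).toReal ^ 2) ν := by
  simp only [sq]
  exact (integrable_toReal_rnDeriv_mul_iff hμν).symm

lemma integral_toReal_rnDeriv_eq_integral_sq (hμν : μ ≪ ν) :
    ∫ x, (μ.rnDeriv ν x).toReal ∂μ = ∫ x, (μ.rnDeriv ν x).toReal ^ 2 ∂ν := by
  simp only [sq]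
  exact (integral_toReal_rnDeriv_mul hμν).symm

/-- `exp KL(μ | ν) ≤ 1 + χ²(μ | ν)`. -/
lemma exp_integral_log_rnDeriv_le_integral_sq [IsProbabilityMeasure μ] (hμν : μ ≪ ν)
    (hsq : Integrable (fun x ↦ (μ.rnDeriv ν x).toReal ^ 2) ν)
    (hlog : Integrable (fun x ↦ log (μ.rnDeriv ν x).toReal) μ) :
    exp (∫ x, log (μ.rnDeriv ν x).toReal ∂μ) ≤ ∫ x, (μ.rnDeriv ν x).toReal ^ 2 ∂ν :=
  integral_toReal_rnDeriv_eq_integral_sq hμν ▸ exp_integral_log_le_integral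
    (toReal_rnDeriv_pos hμν) ((integrable_toReal_rnDeriv_iff_integrable_sq hμν).2 hsq) hlog

end Measure

end MeasureTheory

namespace ProbabilityTheory

lemma integral_div_integral_sq_eq_one_add_variance_div {α : Type*} [MeasurableSpace α]
    {μ : Measure α} [IsProbabilityMeasure μ] {f : α → ℝ} (hf : MemLp f 2 μ) (hmean : μ[f] ≠ 0) :
    ∫ x, (f x / μ[f]) ^ 2 ∂μ = 1 + variance f μ / μ[f] ^ 2 := by
  simp_rw [div_pow]
  rw [integral_div, variance_eq_sub hf]
  field_simp
  simp [Pi.pow_apply]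

end ProbabilityTheory

theorem relative_error_lower_bound_KL {Ω : Type*} [MeasurableSpace Ω]
    (ν nut : Measure Ω) [IsProbabilityMeasure ν] [IsProbabilityMeasure nut]
    (hac : ν ≪ nut) (W : Ω → ℝ) (hW : Measurable W)
    (Z : ℝ) (hZ : Z = ∫ x, Real.exp (-W x) ∂ν) (hZpos : 0 < Z)
    (νstar : Measure Ω)
    (hνstar : νstar = ν.withDensity (fun x => ENNReal.ofReal (Real.exp (-W x) / Z)))
    (hacstar : νstar ≪ nut)
    (hInt : Integrable (fun x => (Real.exp (-W x) * (ν.rnDeriv nut x).toReal) ^ 2) nut)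
    (hIntlog : Integrable (fun x => Real.log ((νstar.rnDeriv nut x).toReal)) νstar) :
    Real.sqrt (Real.exp (∫ x, Real.log ((νstar.rnDeriv nut x).toReal) ∂νstar) - 1)
      ≤ Real.sqrt (variance (fun x => Real.exp (-W x) * (ν.rnDeriv nut x).toReal) nut) / Z := by
  set f : Ω → ℝ := fun x ↦ exp (-W x) * (ν.rnDeriv nut x).toReal
  have htilted : νstar = ν.tilted (-W) := by rw [hνstar, hZ]; rfl
  have : IsProbabilityMeasure νstar :=
    htilted ▸ isProbabilityMeasure_tilted (Integrable.of_integral_ne_zero (hZ ▸ hZpos.ne'))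
  have hmean : nut[f] = Z := by
    simp only [f, mul_comm (exp _)]
    rw [integral_toReal_rnDeriv_mul hac, hZ]
  have hdensity : (fun x ↦ (νstar.rnDeriv nut x).toReal ^ 2)
      =ᵐ[nut] fun x ↦ (f x / nut[f]) ^ 2 := by
    filter_upwards [htilted ▸ toReal_rnDeriv_tilted_left ν hW.neg.aemeasurable] with x hx
    simp only [hx, hmean, Pi.neg_apply, ← hZ, f]
    ring
  have hL2 : MemLp f 2 nut :=
    (memLp_two_iff_integrable_sq (by fun_prop)).2 hInt
  have hsq : Integrable (fun x ↦ (νstar.rnDeriv nut x).toReal ^ 2) nut :=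
    (hInt.div_const (Z ^ 2)).congr (by simpa [div_pow, hmean] using hdensity.symm)
  have hkey := Measure.exp_integral_log_rnDeriv_le_integral_sq hacstar hsq hIntlog
  rw [integral_congr_ae hdensity, integral_div_integral_sq_eq_one_add_variance_div hL2
    (hmean ▸ hZpos.ne'), hmean] at hkey
  calc sqrt (exp (∫ x, log (νstar.rnDeriv nut x).toReal ∂νstar) - 1)
      ≤ sqrt (variance f nut / Z ^ 2) := sqrt_le_sqrt (by linarith)
    _ = sqrt (variance f nut) / Z := by rw [sqrt_div (variance_nonneg _ _), sqrt_sq hZpos.le]
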